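/- arXiv:1605.03319 — 4 statements merged into one kernel-verified Lean document; each statement's English description precedes it below -/
import Mathlib

section
/- The number of binary necklaces of length n containing exactly l ones equals (1/n) · Σ_{d | gcd(l,n)} φ(d) · C(n/d, l/d), where φ is Euler's totient function and C denotes a binomial coefficient. Formally: n divides Σ_{d | gcd(l,n)} φ(d) · C(n/d, l/d), and this sum divided by n counts the orbits of the cyclic group Z/nZ acting by rotation on binary strings of length n with exactly l ones. -/
/-- Two binary strings of length `n` are rotation-equivalent. -/
def necklaceRel (n : ℕ) (f g : Fin n → Bool) : Prop :=
  ∃ k : ℕ, g = f ∘ ⇑((finRotate n) ^ k)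

/-- Number of ones in a binary string. -/
def onesCount {n : ℕ} (f : Fin n → Bool) : ℕ :=
  (Finset.univ.filter (fun i => f i = true)).card

/-- Restriction of the rotation relation to strings with exactly `l` ones. -/
def necklaceRelOnes (n l : ℕ) (f g : {f : Fin n → Bool // onesCount f = l}) : Prop :=
  necklaceRel n f.1 g.1

/-!
Burnside's lemma for `G = ℤ/n` acting by rotation. The rotation by `a` fixes a string exactly
when the string is `a`-periodic, i.e. factors through `G ⧸ ⟨a⟩`, whose `n / d` cosets have
`d = addOrderOf a` elements each. So `a` fixes `C(n/d, l/d)` strings of weight `l` if `d ∣ l`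
and none otherwise, and as `G` has `φ d` elements of order `d`, the fixed points of all rotations
add up to `∑_{d ∣ gcd(l, n)} φ(d) C(n/d, l/d)`, which is `n` times the number of orbits.
-/

open Finset AddAction Function

abbrev StringsOfWeight (G : Type*) [Fintype G] (l : ℕ) := {f : G → Bool // #{i | f i = true} = l}

lemma natCard_weight_eq_choose (α : Type*) [Fintype α] (j : ℕ) :
    Nat.card (StringsOfWeight α j) = (Fintype.card α).choose j := by
  classical
  let toFinset : (α → Bool) ≃ Finset α :=
    { toFun g := {i | g i = true}
      invFun s i := decide (i ∈ s)
      left_inv g := by ext; simp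
      right_inv s := by ext; simp }
  rw [← Fintype.card_finset_len, ← Nat.card_eq_fintype_card]
  exact Nat.card_congr (toFinset.subtypeEquiv fun _ => Iff.rfl)

lemma natCard_mul_weight_eq (α : Type*) [Fintype α] {k : ℕ} (hk : 0 < k) (l : ℕ) :
    Nat.card {g : α → Bool // k * #{i | g i = true} = l} =
      if k ∣ l then (Fintype.card α).choose (l / k) else 0 := by
  split_ifs with hkl
  · obtain ⟨j, rfl⟩ := hkl
    rw [Nat.mul_div_cancel_left j hk, ← natCard_weight_eq_choose]
    exact Nat.card_congr (Equiv.subtypeEquivRight fun g => Nat.mul_left_cancel_iff hk)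
  · have : IsEmpty {g : α → Bool // k * #{i | g i = true} = l} :=
      ⟨fun g => hkl ⟨_, g.2.symm⟩⟩
    exact Nat.card_of_isEmpty

section Strings

variable {G : Type*} [AddGroup G]

def periodicEquivQuotientZMultiples {β : Type*} (a : G) :
    {f : G → β // Periodic f a} ≃ (G ⧸ AddSubgroup.zmultiples a → β) where
  toFun f := Quotient.lift f.1 fun i j hij => by
    obtain ⟨k, hk⟩ := AddSubgroup.mem_zmultiples_iff.1 (QuotientAddGroup.leftRel_apply.1 hij)
    rw [← add_neg_cancel_left i j, ← hk]
    exact (f.2.zsmul k i).symm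
  invFun g := ⟨g ∘ (↑), fun i =>
    congrArg g (QuotientAddGroup.mk_add_of_mem i (AddSubgroup.mem_zmultiples a))⟩
  left_inv _ := rfl
  right_inv g := funext fun q => QuotientAddGroup.induction_on q fun _ => rfl

variable [Fintype G]

lemma card_filter_comp_mk (H : AddSubgroup G) [Fintype (G ⧸ H)] (g : G ⧸ H → Bool) :
    #{i : G | g i = true} = Nat.card H * #{q | g q = true} := by
  simp only [← Fintype.card_subtype, ← Nat.card_eq_fintype_card, ← Nat.card_prod]
  exact Nat.card_congr (QuotientAddGroup.preimageMkEquivAddSubgroupProdSet H {q | g q = true})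

lemma card_filter_add_right (f : G → Bool) (a : G) :
    #{i | f (i + a) = true} = #{i | f i = true} :=
  card_equiv (Equiv.addRight a) (by simp)

instance (l : ℕ) : AddAction G (StringsOfWeight G l) where
  vadd a f := ⟨fun i => f.1 (i + a), (card_filter_add_right f.1 a).trans f.2⟩
  zero_vadd f := Subtype.ext (funext fun i => congrArg f.1 (add_zero i))
  add_vadd a b f := Subtype.ext (funext fun i => congrArg f.1 (add_assoc i a b).symm)

lemma mem_fixedBy_iff_periodic {l : ℕ} (a : G) (f : StringsOfWeight G l) :
    f ∈ fixedBy _ a ↔ Periodic f.1 a := by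
  rw [mem_fixedBy, Subtype.ext_iff, funext_iff]
  rfl

lemma natCard_fixedBy (l : ℕ) (a : G) :
    Nat.card (fixedBy (StringsOfWeight G l) a) =
      if addOrderOf a ∣ l then (Fintype.card G / addOrderOf a).choose (l / addOrderOf a)
      else 0 := by
  classical
  set H := AddSubgroup.zmultiples a
  have card_quotient : Fintype.card (G ⧸ H) = Fintype.card G / addOrderOf a := by
    rw [← Nat.card_eq_fintype_card, ← Nat.card_eq_fintype_card,
      AddSubgroup.card_eq_card_quotient_mul_card_addSubgroup H, Nat.card_zmultiples,
      Nat.mul_div_cancel _ (addOrderOf_pos a)]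
  let fixedEquivPeriodic : fixedBy (StringsOfWeight G l) a ≃
      {f : {f : G → Bool // Periodic f a} // #{i | f.1 i = true} = l} :=
    { toFun x := ⟨⟨x.1.1, (mem_fixedBy_iff_periodic a x.1).1 x.2⟩, x.1.2⟩
      invFun f := ⟨⟨f.1.1, f.2⟩, (mem_fixedBy_iff_periodic a _).2 f.1.2⟩
      left_inv _ := rfl
      right_inv _ := rfl }
  have fixedEquivQuotient : fixedBy (StringsOfWeight G l) a ≃
      {g : G ⧸ H → Bool // addOrderOf a * #{q | g q = true} = l} :=
    fixedEquivPeriodic.trans <| (periodicEquivQuotientZMultiples a).subtypeEquiv fun f => by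
      rw [← Nat.card_zmultiples, ← card_filter_comp_mk]
      rfl
  rw [Nat.card_congr fixedEquivQuotient, natCard_mul_weight_eq _ (addOrderOf_pos a),
    card_quotient]

end Strings

lemma sum_addOrderOf_eq_sum_divisors {G M : Type*} [AddGroup G] [Fintype G] [IsAddCyclic G]
    [AddCommMonoid M] (F : ℕ → M) :
    ∑ a : G, F (addOrderOf a) = ∑ d ∈ (Fintype.card G).divisors, d.totient • F d := by
  classical
  rw [← sum_fiberwise_of_maps_to (g := addOrderOf) (t := (Fintype.card G).divisors)
    fun a _ => Nat.mem_divisors.2 ⟨addOrderOf_dvd_card, Fintype.card_ne_zero⟩]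
  refine sum_congr rfl fun d hd => ?_
  rw [sum_congr rfl fun a ha => congrArg F (mem_filter.1 ha).2, sum_const,
    IsAddCyclic.card_addOrderOf_eq_totient (Nat.mem_divisors.1 hd).1]

lemma sum_divisors_ite_dvd {M : Type*} [AddCommMonoid M] {n : ℕ} (hn : n ≠ 0) (l : ℕ)
    (F : ℕ → M) :
    ∑ d ∈ n.divisors, (if d ∣ l then F d else 0) = ∑ d ∈ (Nat.gcd l n).divisors, F d := by
  rw [← sum_filter]
  congr 1
  ext d
  simp [Nat.dvd_gcd_iff, hn, and_comm]

theorem natCard_orbits_mul_card (G : Type*) [AddGroup G] [Fintype G] [IsAddCyclic G] (l : ℕ) :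
    Nat.card (orbitRel.Quotient G (StringsOfWeight G l)) * Fintype.card G =
      ∑ d ∈ (Nat.gcd l (Fintype.card G)).divisors,
        d.totient * (Fintype.card G / d).choose (l / d) := by
  classical
  calc _ = ∑ a : G, Nat.card (fixedBy (StringsOfWeight G l) a) := by
        simp only [Nat.card_eq_fintype_card, sum_card_fixedBy_eq_card_orbits_mul_card_addGroup]
    _ = ∑ d ∈ (Fintype.card G).divisors,
          d.totient * (if d ∣ l then (Fintype.card G / d).choose (l / d) else 0) := by
        simp only [natCard_fixedBy]
        exact sum_addOrderOf_eq_sum_divisors (G := G)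
          fun d => if d ∣ l then (Fintype.card G / d).choose (l / d) else 0
    _ = _ := by
        simp only [mul_ite, mul_zero]
        exact sum_divisors_ite_dvd Fintype.card_ne_zero l _

section Fin

open scoped Fin.NatCast

variable {n : ℕ} [NeZero n]

instance : IsAddCyclic (Fin n) :=
  ⟨⟨1, fun x => ⟨x.val, by
    dsimp only
    rw [natCast_zsmul, nsmul_one, Fin.cast_val_eq_self]⟩⟩⟩

lemma finRotate_pow_apply (k : ℕ) (i : Fin n) : (finRotate n ^ k) i = i + (k : Fin n) := by
  induction k with
  | zero => simp
  | succ k ih => rw [pow_succ', Equiv.Perm.mul_apply, ih, finRotate_apply, Nat.cast_succ, add_assoc]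

lemma necklaceRel_iff {f g : Fin n → Bool} :
    necklaceRel n f g ↔ ∃ a : Fin n, g = fun i => f (i + a) := by
  simp only [necklaceRel, funext_iff, Function.comp_apply, finRotate_pow_apply]
  exact ⟨fun ⟨k, hk⟩ => ⟨k, hk⟩, fun ⟨a, ha⟩ => ⟨a.val, by simpa using ha⟩⟩

lemma natCard_quot_necklaceRelOnes (l : ℕ) :
    Nat.card (Quot (necklaceRelOnes n l)) =
      Nat.card (orbitRel.Quotient (Fin n) (StringsOfWeight (Fin n) l)) :=
  Nat.card_congr <| Quot.congr (Equiv.subtypeEquivRight fun _ => Iff.rfl) fun x y => by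
    rw [necklaceRelOnes, necklaceRel_iff, orbitRel_apply, mem_orbit_symm, mem_orbit_iff]
    simp only [Subtype.ext_iff, eq_comm (a := y.1)]
    rfl

end Fin

theorem necklace_count_with_l_ones_general (n l : ℕ) (hn : 1 ≤ n) :
    n ∣ (∑ d ∈ (Nat.gcd l n).divisors, d.totient * Nat.choose (n / d) (l / d)) ∧
    Nat.card (Quot (necklaceRelOnes n l)) =
      (∑ d ∈ (Nat.gcd l n).divisors, d.totient * Nat.choose (n / d) (l / d)) / n := by
  have : NeZero n := ⟨by omega⟩
  have burnside := natCard_orbits_mul_card (Fin n) l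
  rw [Fintype.card_fin, ← natCard_quot_necklaceRelOnes] at burnside
  rw [← burnside]
  exact ⟨dvd_mul_left n _, (Nat.mul_div_cancel _ (by omega)).symm⟩

theorem necklace_count_with_l_ones (n l : ℕ) (hn : 1 ≤ n) (hl : l ≤ n) :
    n ∣ (∑ d ∈ (Nat.gcd l n).divisors, d.totient * Nat.choose (n / d) (l / d)) ∧
    Nat.card (Quot (necklaceRelOnes n l)) =
      (∑ d ∈ (Nat.gcd l n).divisors, d.totient * Nat.choose (n / d) (l / d)) / n :=
  necklace_count_with_l_ones_general n l hn
end

section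
/- For every positive integer n and every divisor l of interest, n divides the sum Σ_{d | gcd(l,n)} φ(d) · C(n/d, l/d); that is, the quantity N(n,l) = (1/n)·Σ_{d | gcd(l,n)} φ(d)·C(n/d, l/d) is a natural number. -/
/-!
`ZMod n` acts by translation on its `l`-element subsets (necklaces with `l` black beads), so by
Burnside's lemma `n` divides the total number of fixed points. A subset fixed by `g` is a union
of cosets of `⟨g⟩`, so there are `C(n / d, l / d)` of them when `d = addOrderOf g` divides `l`
and none otherwise; since `φ d` elements of `ZMod n` have order `d`, the total is the sum in the
statement.
-/

open Finset Pointwise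

theorem IsAddCyclic.sum_comp_addOrderOf {G M : Type*} [AddGroup G] [IsAddCyclic G] [Fintype G]
    [AddCommMonoid M] (f : ℕ → M) :
    ∑ g : G, f (addOrderOf g) = ∑ d ∈ (Fintype.card G).divisors, d.totient • f d := by
  classical
  rw [← sum_fiberwise_of_maps_to (g := addOrderOf) (t := (Fintype.card G).divisors)
    (fun g _ => Nat.mem_divisors.mpr ⟨addOrderOf_dvd_card, Fintype.card_ne_zero⟩)]
  refine sum_congr rfl fun d hd => ?_
  rw [sum_congr rfl fun g hg => by rw [(mem_filter.mp hg).2], sum_const,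
    IsAddCyclic.card_addOrderOf_eq_totient (Nat.dvd_of_mem_divisors hd)]

theorem Nat.sum_divisors_gcd {M : Type*} [AddCommMonoid M] {n : ℕ} (hn : n ≠ 0) (l : ℕ)
    (f : ℕ → M) : ∑ d ∈ (l.gcd n).divisors, f d = ∑ d ∈ n.divisors, if d ∣ l then f d else 0 := by
  rw [← sum_filter, ← Nat.divisors_filter_dvd_of_dvd hn (Nat.gcd_dvd_right l n)]
  refine sum_congr (filter_congr fun d hd => ?_) fun _ _ => rfl
  rw [Nat.dvd_gcd_iff, and_iff_left (Nat.dvd_of_mem_divisors hd)]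

theorem Finset.card_filter_mul_card_eq {α : Type*} [Fintype α] {c : ℕ} (hc : 0 < c) (l : ℕ) :
    #{t : Finset α | c * #t = l} = if c ∣ l then (Fintype.card α).choose (l / c) else 0 := by
  split_ifs with hcl
  · obtain ⟨k, rfl⟩ := hcl
    simp only [Nat.mul_left_cancel_iff hc, Nat.mul_div_cancel_left k hc]
    rw [← card_univ, ← card_powersetCard, powersetCard_eq_filter, powerset_univ]
  · exact card_eq_zero.mpr <| filter_false_of_mem fun t _ ht => hcl ⟨#t, ht.symm⟩

namespace AddSubgroup

variable {G : Type*} [AddGroup G] [Fintype G] (H : AddSubgroup G)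
  [DecidableEq (G ⧸ H)]

def saturate (t : Finset (G ⧸ H)) : Finset G := {x | (x : G ⧸ H) ∈ t}

variable {H}

@[simp]
theorem mem_saturate {t : Finset (G ⧸ H)} {x : G} : x ∈ H.saturate t ↔ (x : G ⧸ H) ∈ t := by
  simp [saturate]

theorem saturate_injective : Function.Injective H.saturate := by
  intro t t' h
  ext q
  obtain ⟨x, rfl⟩ := QuotientAddGroup.mk_surjective q
  simpa using congr(x ∈ $h)

theorem card_saturate (t : Finset (G ⧸ H)) : #(H.saturate t) = Nat.card H * #t := by
  rw [← Nat.card_eq_finsetCard, ← Nat.card_eq_finsetCard t, ← Nat.card_prod]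
  exact Nat.card_congr <| (Equiv.subtypeEquivRight fun x => by simp).trans
    (QuotientAddGroup.preimageMkEquivAddSubgroupProdSet H t)

theorem le_stabilizer_iff_exists_saturate [H.Normal] [DecidableEq G] {s : Finset G} :
    H ≤ AddAction.stabilizer G s ↔ ∃ t, H.saturate t = s := by
  constructor
  · intro hs
    refine ⟨s.image (↑), Finset.ext fun x => ?_⟩
    simp only [mem_saturate, mem_image]
    refine ⟨fun ⟨y, hy, hyx⟩ => ?_, fun hx => ⟨x, hx, rfl⟩⟩
    have hxy : x + -y ∈ H := by
      simpa [← add_assoc] using ‹H.Normal›.conj_mem _ (QuotientAddGroup.eq.mp hyx) y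
    have hstab : (x + -y) +ᵥ s = s := hs hxy
    simpa [hstab] using (vadd_mem_vadd_finset_iff (x + -y)).mpr hy
  · rintro ⟨t, rfl⟩ h hh
    rw [AddAction.mem_stabilizer_iff]
    ext x
    rw [← neg_vadd_mem_iff, mem_saturate, mem_saturate, vadd_eq_add,
      QuotientAddGroup.mk_add, QuotientAddGroup.mk_neg, (QuotientAddGroup.eq_zero_iff h).mpr hh,
      neg_zero, zero_add]

end AddSubgroup

theorem Set.powersetCard.card_fixedBy {G α : Type*} [AddGroup G] [AddAction G α] [Fintype α]
    [DecidableEq α] (g : G) (l : ℕ) :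
    Nat.card (AddAction.fixedBy (powersetCard α l) g) = #{s : Finset α | #s = l ∧ g +ᵥ s = s} := by
  rw [← Nat.card_eq_finsetCard]
  refine Nat.card_congr <| (Equiv.subtypeEquivRight fun s => ?_).trans
    ((Equiv.subtypeSubtypeEquivSubtypeInter _ (fun s : Finset α => g +ᵥ s = s)).trans
      (Equiv.subtypeEquivRight fun s => ?_))
  · rw [AddAction.mem_fixedBy, ← Subtype.val_inj, coe_vadd]
  · simp [mem_iff]

theorem card_filter_vadd_eq_self {G : Type*} [AddCommGroup G] [Fintype G] [DecidableEq G] (g : G)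
    (l : ℕ) : #{s : Finset G | #s = l ∧ g +ᵥ s = s} =
      if addOrderOf g ∣ l then (Fintype.card G / addOrderOf g).choose (l / addOrderOf g) else 0 := by
  classical
  set H := AddSubgroup.zmultiples g
  have hfixed (s : Finset G) : g +ᵥ s = s ↔ ∃ t, H.saturate t = s := by
    rw [← AddAction.mem_stabilizer_iff, ← AddSubgroup.zmultiples_le,
      AddSubgroup.le_stabilizer_iff_exists_saturate]
  have himage : ({s : Finset G | #s = l ∧ g +ᵥ s = s} : Finset (Finset G)) =
      Finset.map ⟨H.saturate, AddSubgroup.saturate_injective⟩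
        {t : Finset (G ⧸ H) | Nat.card H * #t = l} := by
    ext s
    simp only [hfixed, mem_filter, mem_univ, true_and, mem_map, Function.Embedding.coeFn_mk]
    constructor
    · rintro ⟨rfl, t, rfl⟩
      exact ⟨t, (AddSubgroup.card_saturate t).symm, rfl⟩
    · rintro ⟨t, rfl, rfl⟩
      exact ⟨AddSubgroup.card_saturate t, t, rfl⟩
  have hquot : Fintype.card (G ⧸ H) = Fintype.card G / addOrderOf g := by
    rw [← Nat.card_eq_fintype_card, ← Nat.card_eq_fintype_card,
      H.card_eq_card_quotient_mul_card_addSubgroup, Nat.card_zmultiples,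
      Nat.mul_div_cancel _ (addOrderOf_pos g)]
  rw [himage, card_map, card_filter_mul_card_eq Nat.card_pos, Nat.card_zmultiples, hquot]

theorem necklace_sum_divisible_general (n l : ℕ) (hn : 1 ≤ n) :
    n ∣ ∑ d ∈ (Nat.gcd l n).divisors, d.totient * Nat.choose (n / d) (l / d) := by
  classical
  have : NeZero n := ⟨Nat.one_le_iff_ne_zero.mp hn⟩
  have burnside := AddAction.sum_card_fixedBy_eq_card_orbits_mul_card_addGroup (ZMod n)
    (Set.powersetCard (ZMod n) l)
  simp only [← Nat.card_eq_fintype_card, Set.powersetCard.card_fixedBy,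
    card_filter_vadd_eq_self] at burnside
  rw [Nat.card_zmod, IsAddCyclic.sum_comp_addOrderOf
    (fun d => if d ∣ l then (n / d).choose (l / d) else 0), ZMod.card] at burnside
  simp only [smul_eq_mul, mul_ite, mul_zero] at burnside
  rw [Nat.sum_divisors_gcd (NeZero.ne n)]
  exact Dvd.intro_left _ burnside.symm

theorem necklace_sum_divisible (n l : ℕ) (hn : 1 ≤ n) (hl : l ≤ n) :
    n ∣ ∑ d ∈ (Nat.gcd l n).divisors, d.totient * Nat.choose (n / d) (l / d) :=
  necklace_sum_divisible_general n l hn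
end

section
/- For even n ≥ 4, the number of binary necklaces of length n with an even number of 1's is strictly greater than the number of binary necklaces of length n with an odd number of 1's; moreover their difference is strictly greater than 1. -/
/-- Rotation relation restricted to strings with an even number of ones. -/
def necklaceRelEven (n : ℕ) (f g : {f : Fin n → Bool // Even (onesCount f)}) : Prop :=
  necklaceRel n f.1 g.1

/-- Rotation relation restricted to strings with an odd number of ones. -/
def necklaceRelOdd (n : ℕ) (f g : {f : Fin n → Bool // Odd (onesCount f)}) : Prop :=
  necklaceRel n f.1 g.1

/-!
Burnside's lemma for the rotation action of `Fin n` on the even (resp. odd) weight strings turns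
`n · (#even necklaces - #odd necklaces)` into `∑_c (e_c - o_c)`, where `e_c`, `o_c` count the
even and odd strings fixed by rotation by `c`. A string fixed by `c` is constant on the cosets
of `⟨c⟩`, so its weight is a multiple of `addOrderOf c`. If this order is even, all
`2 ^ [Fin n : ⟨c⟩]` fixed strings are even; if it is odd, flipping the bits on `⟨c⟩` maps odd
fixed strings injectively to even ones. For `n` even, every odd `c` has even order and
contributes at least `2`, while `c = n / 2` contributes `2 ^ (n / 2) > 2`, so the sum exceeds
`n` and the difference of the necklace counts exceeds `1`.
-/

open AddAction Finset

namespace Necklace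

theorem onesCount_eq_natCard {n : ℕ} (f : Fin n → Bool) :
    onesCount f = Nat.card {i | f i = true} := by
  rw [onesCount, Nat.card_eq_fintype_card, Fintype.card_ofFinset]
  rfl

def flipOn {n : ℕ} (s : Finset (Fin n)) (f : Fin n → Bool) : Fin n → Bool :=
  fun i => xor (decide (i ∈ s)) (f i)

theorem flipOn_involutive {n : ℕ} (s : Finset (Fin n)) : Function.Involutive (flipOn s) :=
  fun f => funext fun i => by simp [flipOn]

theorem onesCount_flipOn {n : ℕ} (s : Finset (Fin n)) (f : Fin n → Bool) :
    onesCount (flipOn s f) + 2 * #{i ∈ s | f i = true} = onesCount f + #s := by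
  have hinter : #{i ∈ s | f i = true} = #{i | i ∈ s ∧ f i = true} := by
    rw [← filter_filter, filter_univ_mem]
  have hs : #s = #{i | i ∈ s} := by rw [filter_univ_mem]
  rw [hinter, hs, onesCount, onesCount, card_filter, card_filter, card_filter, card_filter,
    mul_sum, ← sum_add_distrib, ← sum_add_distrib]
  refine sum_congr rfl fun i _ => ?_
  by_cases hi : i ∈ s <;> cases hf : f i <;> simp [flipOn, hi, hf]

section Rotation

variable {n : ℕ} [NeZero n]

instance : AddAction (Fin n) (Fin n → Bool) where
  vadd c f i := f (i + c)
  zero_vadd f := funext fun i => congrArg f (add_zero i)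
  add_vadd c d f := funext fun i => congrArg f (add_assoc i c d).symm

theorem vadd_apply (c : Fin n) (f : Fin n → Bool) (i : Fin n) : (c +ᵥ f) i = f (i + c) := rfl

theorem onesCount_vadd (c : Fin n) (f : Fin n → Bool) : onesCount (c +ᵥ f) = onesCount f := by
  simp only [onesCount_eq_natCard]
  exact Nat.card_congr ((Equiv.addRight c).subtypeEquiv fun i => Iff.rfl)

theorem vadd_flipOn {c : Fin n} {s : Finset (Fin n)} (hs : ∀ i, i + c ∈ s ↔ i ∈ s)
    (f : Fin n → Bool) : c +ᵥ flipOn s f = flipOn s (c +ᵥ f) :=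
  funext fun i => by simp only [vadd_apply, flipOn, hs]

instance (p : ℕ → Prop) : AddAction (Fin n) {f : Fin n → Bool // p (onesCount f)} where
  vadd c f := ⟨c +ᵥ f.1, (onesCount_vadd c f.1).symm ▸ f.2⟩
  zero_vadd f := Subtype.ext (zero_vadd _ f.1)
  add_vadd c d f := Subtype.ext (add_vadd c d f.1)

open Fin.NatCast in
theorem finRotate_pow_apply (k : ℕ) (i : Fin n) : (finRotate n ^ k) i = i + k := by
  induction k generalizing i with
  | zero => simp
  | succ k ih => rw [pow_succ', Equiv.Perm.mul_apply, ih, finRotate_apply]; push_cast; abel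

open Fin.NatCast in
theorem necklaceRel_iff (f g : Fin n → Bool) : necklaceRel n f g ↔ ∃ c : Fin n, c +ᵥ f = g := by
  constructor
  · rintro ⟨k, rfl⟩
    exact ⟨k, funext fun i => by rw [vadd_apply, Function.comp_apply, finRotate_pow_apply]⟩
  · rintro ⟨c, rfl⟩
    exact ⟨c.val, funext fun i => by rw [vadd_apply, Function.comp_apply, finRotate_pow_apply,
      Fin.cast_val_eq_self]⟩

theorem card_quot_mul_eq_sum_card_fixedBy (p : ℕ → Prop) :
    Nat.card (Quot fun f g : {f : Fin n → Bool // p (onesCount f)} => necklaceRel n f g) * n =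
      ∑ c : Fin n, Nat.card (fixedBy {f : Fin n → Bool // p (onesCount f)} c) := by
  classical
  have hrel (f g : {f : Fin n → Bool // p (onesCount f)}) :
      necklaceRel n f g ↔ orbitRel (Fin n) _ f g := by
    rw [necklaceRel_iff, orbitRel_apply, mem_orbit_symm, mem_orbit_iff]
    exact exists_congr fun c => by rw [Subtype.ext_iff]; rfl
  have := sum_card_fixedBy_eq_card_orbits_mul_card_addGroup (Fin n)
    {f : Fin n → Bool // p (onesCount f)}
  simp only [← Nat.card_eq_fintype_card] at this
  rw [this, Nat.card_congr (Quot.congrRight hrel), Nat.card_fin]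
  rfl

theorem mem_fixedBy_iff_zmultiples_le {c : Fin n} {f : Fin n → Bool} :
    f ∈ fixedBy (Fin n → Bool) c ↔ AddSubgroup.zmultiples c ≤ stabilizer (Fin n) f := by
  rw [AddSubgroup.zmultiples_le, mem_stabilizer_iff, mem_fixedBy]

def fixedByEquiv (c : Fin n) :
    fixedBy (Fin n → Bool) c ≃ (Fin n ⧸ AddSubgroup.zmultiples c → Bool) where
  toFun f := Quotient.lift f.1 fun i j hij => by
    have hstab : -i + j ∈ stabilizer (Fin n) f.1 :=
      mem_fixedBy_iff_zmultiples_le.1 f.2 (QuotientAddGroup.leftRel_apply.1 hij)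
    calc f.1 i = ((-i + j) +ᵥ f.1) i := by rw [mem_stabilizer_iff.1 hstab]
      _ = f.1 j := by rw [vadd_apply, add_neg_cancel_left]
  invFun g := ⟨g ∘ QuotientAddGroup.mk, funext fun i => congrArg g <| QuotientAddGroup.eq.2 <| by
    rw [neg_add_rev, neg_add_cancel_right]
    exact neg_mem (AddSubgroup.mem_zmultiples c)⟩
  left_inv _ := rfl
  right_inv g := funext fun q => QuotientAddGroup.induction_on q fun _ => rfl

theorem card_fixedBy (c : Fin n) :
    Nat.card (fixedBy (Fin n → Bool) c) = 2 ^ (AddSubgroup.zmultiples c).index := by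
  rw [Nat.card_congr (fixedByEquiv c), Nat.card_fun, Nat.card_eq_fintype_card (α := Bool),
    Fintype.card_bool]
  rfl

theorem addOrderOf_dvd_onesCount {c : Fin n} {f : Fin n → Bool}
    (hf : f ∈ fixedBy (Fin n → Bool) c) : addOrderOf c ∣ onesCount f := by
  rw [onesCount_eq_natCard, ← Nat.card_zmultiples]
  -- the support of `f` is the preimage of a set of cosets of `zmultiples c`
  exact Dvd.intro _ ((Nat.card_congr (QuotientAddGroup.preimageMkEquivAddSubgroupProdSet _
    {q | fixedByEquiv c ⟨f, hf⟩ q = true})).trans (Nat.card_prod _ _)).symm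

theorem even_onesCount_of_mem_fixedBy {c : Fin n} (hc : Even (addOrderOf c)) {f : Fin n → Bool}
    (hf : f ∈ fixedBy (Fin n → Bool) c) : Even (onesCount f) :=
  even_iff_two_dvd.2 (hc.two_dvd.trans (addOrderOf_dvd_onesCount hf))

def fixedByWeightEquiv (p : ℕ → Prop) (c : Fin n) :
    fixedBy {f : Fin n → Bool // p (onesCount f)} c ≃
      {f : fixedBy (Fin n → Bool) c // p (onesCount f.1)} where
  toFun f := ⟨⟨f.1.1, congrArg Subtype.val f.2⟩, f.1.2⟩
  invFun f := ⟨⟨f.1.1, f.2⟩, Subtype.ext f.1.2⟩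
  left_inv _ := rfl
  right_inv _ := rfl

theorem card_fixedBy_odd_of_even_addOrderOf {c : Fin n} (hc : Even (addOrderOf c)) :
    Nat.card (fixedBy {f : Fin n → Bool // Odd (onesCount f)} c) = 0 := by
  rw [Nat.card_congr (fixedByWeightEquiv _ c), Nat.card_eq_zero]
  exact .inl ⟨fun f => Nat.not_odd_iff_even.2 (even_onesCount_of_mem_fixedBy hc f.1.2) f.2⟩

theorem card_fixedBy_even_of_even_addOrderOf {c : Fin n} (hc : Even (addOrderOf c)) :
    Nat.card (fixedBy {f : Fin n → Bool // Even (onesCount f)} c) =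
      2 ^ (AddSubgroup.zmultiples c).index := by
  rw [Nat.card_congr (fixedByWeightEquiv _ c), ← card_fixedBy]
  exact Nat.card_congr (Equiv.subtypeUnivEquiv fun f => even_onesCount_of_mem_fixedBy hc f.2)

theorem card_fixedBy_even_sub_odd_of_even_addOrderOf {c : Fin n} (hc : Even (addOrderOf c)) :
    Nat.card (fixedBy {f : Fin n → Bool // Even (onesCount f)} c) -
      Nat.card (fixedBy {f : Fin n → Bool // Odd (onesCount f)} c) =
        2 ^ (AddSubgroup.zmultiples c).index := by
  rw [card_fixedBy_even_of_even_addOrderOf hc, card_fixedBy_odd_of_even_addOrderOf hc,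
    Nat.sub_zero]

theorem card_fixedBy_odd_le_even (c : Fin n) :
    Nat.card (fixedBy {f : Fin n → Bool // Odd (onesCount f)} c) ≤
      Nat.card (fixedBy {f : Fin n → Bool // Even (onesCount f)} c) := by
  classical
  rcases Nat.even_or_odd (addOrderOf c) with hc | hc
  · rw [card_fixedBy_odd_of_even_addOrderOf hc]
    exact Nat.zero_le _
  let s : Finset (Fin n) := {i | i ∈ AddSubgroup.zmultiples c}
  have hs (i : Fin n) : i + c ∈ s ↔ i ∈ s := by
    simpa [s] using AddSubgroup.add_mem_cancel_right _ (AddSubgroup.mem_zmultiples c)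
  have hcard : #s = addOrderOf c := by
    rw [← Nat.card_zmultiples, Nat.card_eq_fintype_card, Fintype.card_subtype]
  rw [Nat.card_congr (fixedByWeightEquiv _ c), Nat.card_congr (fixedByWeightEquiv _ c)]
  refine Nat.card_le_card_of_injective (fun f => ⟨⟨flipOn s f.1.1, ?_⟩, ?_⟩) ?_
  · rw [mem_fixedBy, vadd_flipOn hs, f.1.2]
  · have hsum : Even (onesCount (flipOn s f.1.1) + 2 * #{i ∈ s | f.1.1 i = true}) :=
      onesCount_flipOn s f.1.1 ▸ f.2.add_odd (hcard ▸ hc)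
    exact (Nat.even_add.1 hsum).2 (even_two_mul _)
  · intro f g hfg
    exact Subtype.ext <| Subtype.ext <| (flipOn_involutive s).injective <|
      congrArg (fun f => f.1.1) hfg

theorem card_quot_odd_mul_add_sum_eq :
    Nat.card (Quot (necklaceRelOdd n)) * n +
        ∑ c : Fin n, (Nat.card (fixedBy {f : Fin n → Bool // Even (onesCount f)} c) -
          Nat.card (fixedBy {f : Fin n → Bool // Odd (onesCount f)} c)) =
      Nat.card (Quot (necklaceRelEven n)) * n := by
  have hodd : Nat.card (Quot (necklaceRelOdd n)) * n = _ := card_quot_mul_eq_sum_card_fixedBy Odd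
  have heven : Nat.card (Quot (necklaceRelEven n)) * n = _ :=
    card_quot_mul_eq_sum_card_fixedBy Even
  rw [hodd, heven, ← sum_add_distrib]
  exact sum_congr rfl fun c _ => Nat.add_sub_cancel' (card_fixedBy_odd_le_even c)

theorem val_nsmul (m : ℕ) (c : Fin n) : ((m • c : Fin n) : ℕ) = m * c % n := by
  induction m with
  | zero => simp
  | succ m ih => rw [succ_nsmul, Fin.val_add, ih, Nat.mod_add_mod, Nat.succ_mul]

theorem even_addOrderOf_of_odd_val (hn : Even n) {c : Fin n} (hc : Odd (c : ℕ)) :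
    Even (addOrderOf c) := by
  have h0 : addOrderOf c * c % n = 0 := by
    rw [← val_nsmul, addOrderOf_nsmul_eq_zero, Fin.val_zero]
  have h2 : 2 ∣ addOrderOf c * c := hn.two_dvd.trans (Nat.dvd_of_mod_eq_zero h0)
  exact even_iff_two_dvd.2 ((Nat.prime_two.dvd_mul.1 h2).resolve_right hc.not_two_dvd_nat)

theorem addOrderOf_eq_two_of_two_mul_val {c : Fin n} (hc : 2 * (c : ℕ) = n) :
    addOrderOf c = 2 := by
  refine addOrderOf_eq_prime (Fin.ext ?_) fun h => NeZero.ne n ?_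
  · rw [val_nsmul, hc, Nat.mod_self, Fin.val_zero]
  · rw [← hc, h, Fin.val_zero, mul_zero]

theorem index_zmultiples (c : Fin n) : (AddSubgroup.zmultiples c).index = n / addOrderOf c := by
  have h := (AddSubgroup.zmultiples c).card_mul_index
  rw [Nat.card_zmultiples, Nat.card_fin] at h
  exact Nat.eq_div_of_mul_eq_right (addOrderOf_pos c).ne' h

end Rotation

theorem lt_sum_of_two_le_of_odd {n : ℕ} (hn : Even n) (D : Fin n → ℕ)
    (hD : ∀ c : Fin n, Odd (c : ℕ) → 2 ≤ D c) (h : Fin n) (hh : 2 < D h) : n < ∑ c, D c := by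
  classical
  let A : Finset (Fin n) := {c | Odd (c : ℕ)}
  have hA : n / 2 ≤ #A := by
    refine le_card_of_inj_on_range (fun k => ⟨(2 * k + 1) % n, Nat.mod_lt _ h.pos⟩)
      (fun k hk => ?_) fun i hi j hj hij => ?_
    · simp [A, Nat.mod_eq_of_lt (by omega : 2 * k + 1 < n)]
    · simp only [Fin.mk.injEq] at hij
      rw [Nat.mod_eq_of_lt (by omega), Nat.mod_eq_of_lt (by omega)] at hij
      omega
  have hsum : #(A.erase h) • 2 ≤ ∑ c ∈ A.erase h, D c :=
    card_nsmul_le_sum _ _ 2 fun c hc => hD c (mem_filter.1 (mem_of_mem_erase hc)).2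
  have hpos := h.pos
  calc n < D h + 2 * (#A - 1) := by obtain ⟨k, rfl⟩ := hn; omega
    _ ≤ D h + ∑ c ∈ A.erase h, D c := by
      have := pred_card_le_card_erase (s := A) (a := h)
      rw [smul_eq_mul] at hsum
      omega
    _ ≤ D h + ∑ c ∈ univ.erase h, D c := by
      gcongr
      exact subset_univ A
    _ = ∑ c, D c := add_sum_erase _ _ (mem_univ h)

end Necklace

open Necklace

theorem even_necklaces_exceed_odd (n : ℕ) (hn : 4 ≤ n) (he : Even n) :
    Nat.card (Quot (necklaceRelOdd n)) < Nat.card (Quot (necklaceRelEven n)) ∧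
    1 < Nat.card (Quot (necklaceRelEven n)) - Nat.card (Quot (necklaceRelOdd n)) := by
  have : NeZero n := ⟨by omega⟩
  have hdiff : n < ∑ c : Fin n, (Nat.card (fixedBy {f : Fin n → Bool // Even (onesCount f)} c) -
      Nat.card (fixedBy {f : Fin n → Bool // Odd (onesCount f)} c)) := by
    let h : Fin n := ⟨n / 2, by omega⟩
    have h2 : addOrderOf h = 2 := addOrderOf_eq_two_of_two_mul_val (Nat.two_mul_div_two_of_even he)
    refine lt_sum_of_two_le_of_odd he _ (fun c hc => ?_) h ?_
    · rw [card_fixedBy_even_sub_odd_of_even_addOrderOf (even_addOrderOf_of_odd_val he hc)]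
      exact Nat.le_self_pow AddSubgroup.index_ne_zero_of_finite 2
    · rw [card_fixedBy_even_sub_odd_of_even_addOrderOf (h2 ▸ even_two), index_zmultiples, h2]
      exact lt_of_lt_of_le (by norm_num) (Nat.pow_le_pow_right two_pos (by omega : 2 ≤ n / 2))
  have hlt : (Nat.card (Quot (necklaceRelOdd n)) + 1) * n <
      Nat.card (Quot (necklaceRelEven n)) * n := by
    rw [add_mul, one_mul, ← card_quot_odd_mul_add_sum_eq]
    omega
  have := Nat.lt_of_mul_lt_mul_right hlt
  omega
end

section
/- For even n, the identity Σ_{l=0}^{n/2} Σ_{d | gcd(2l,n)} φ(d)·C(n/d, 2l/d) = Σ_{d | n, 2 | d} φ(d)·2^{n/d} + Σ_{d | n, 2∤d} φ(d)·2^{n/d - 1} holds. -/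
/-!
Substitute k = 2l and note that the divisors of gcd(k, n) are the divisors of n that divide k,
so after exchanging the sums a divisor d of n contributes φ(d) times the sum of C(n/d, j) over
those j ≤ n/d with k = d j even. For even d that is every j, giving the full row sum 2^(n/d);
for odd d it is the even j only, i.e. half the row, 2^(n/d - 1).
-/

open Finset Nat

namespace Nat

theorem image_mul_left_range_eq_filter_dvd {d : ℕ} (hd : 0 < d) (N : ℕ) :
    (range (N / d + 1)).image (d * ·) = (range (N + 1)).filter (d ∣ ·) := by
  ext k
  simp only [mem_image, mem_filter, mem_range, Nat.lt_succ_iff]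
  constructor
  · rintro ⟨j, hj, rfl⟩
    exact ⟨mul_comm d j ▸ (Nat.le_div_iff_mul_le hd).1 hj, dvd_mul_right d j⟩
  · rintro ⟨hk, j, rfl⟩
    exact ⟨j, (Nat.le_div_iff_mul_le hd).2 (mul_comm d j ▸ hk), rfl⟩

theorem sum_filter_dvd_range {M : Type*} [AddCommMonoid M] {d : ℕ} (hd : 0 < d) (N : ℕ)
    (f : ℕ → M) :
    ∑ k ∈ (range (N + 1)).filter (d ∣ ·), f k = ∑ j ∈ range (N / d + 1), f (d * j) := by
  rw [← image_mul_left_range_eq_filter_dvd hd,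
    sum_image fun _ _ _ _ h => Nat.eq_of_mul_eq_mul_left hd h]

theorem sum_filter_two_dvd_choose {m : ℕ} (hm : m ≠ 0) :
    ∑ k ∈ (range (m + 1)).filter (2 ∣ ·), m.choose k = 2 ^ (m - 1) := by
  have twice :
      (2 : ℤ) * ∑ k ∈ (range (m + 1)).filter (2 ∣ ·), (m.choose k : ℤ) = 2 ^ m :=
    calc _ = ∑ k ∈ range (m + 1), ((m.choose k : ℤ) + (-1) ^ k * m.choose k) := by
          rw [mul_sum, sum_filter]
          refine sum_congr rfl fun k _ => ?_
          split_ifs with hk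
          · rw [(even_iff_two_dvd.2 hk).neg_one_pow]; ring
          · rw [(Nat.not_even_iff_odd.1 (mt even_iff_two_dvd.1 hk)).neg_one_pow]; ring
      _ = 2 ^ m := by
          rw [sum_add_distrib, Int.alternating_sum_range_choose_of_ne hm, add_zero]
          exact_mod_cast sum_range_choose m
  rw [← mul_pow_sub_one hm] at twice
  exact_mod_cast mul_left_cancel₀ two_ne_zero twice

theorem sum_filter_two_dvd_mul_choose (d : ℕ) {m : ℕ} (hm : m ≠ 0) :
    ∑ j ∈ (range (m + 1)).filter (fun j => 2 ∣ d * j), m.choose j =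
      if 2 ∣ d then 2 ^ m else 2 ^ (m - 1) := by
  split_ifs with hd
  · rw [filter_true_of_mem fun j _ => dvd_mul_of_dvd_left hd j, sum_range_choose]
  · rw [← sum_filter_two_dvd_choose hm]
    exact sum_congr (filter_congr fun j _ => by rw [prime_two.dvd_mul, or_iff_right hd])
      fun _ _ => rfl

theorem divisors_gcd_eq_filter_dvd {n : ℕ} (hn : n ≠ 0) (k : ℕ) :
    (gcd k n).divisors = n.divisors.filter (· ∣ k) := by
  rw [← divisors_filter_dvd_of_dvd hn (gcd_dvd_right k n)]
  refine filter_congr fun d hd => ?_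
  exact ⟨fun h => h.trans (gcd_dvd_left k n), fun h => dvd_gcd h (dvd_of_mem_divisors hd)⟩

end Nat

theorem even_ones_sum_identity_general (n : ℕ) (hn : 0 < n) :
    ∑ l ∈ Finset.range (n / 2 + 1),
        ∑ d ∈ (Nat.gcd (2 * l) n).divisors, d.totient * Nat.choose (n / d) (2 * l / d) =
      (∑ d ∈ n.divisors.filter (fun d => 2 ∣ d), d.totient * 2 ^ (n / d)) +
      (∑ d ∈ n.divisors.filter (fun d => ¬ 2 ∣ d), d.totient * 2 ^ (n / d - 1)) := by
  calc _ = ∑ k ∈ (range (n + 1)).filter (2 ∣ ·),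
          ∑ d ∈ n.divisors.filter (· ∣ k), φ d * (n / d).choose (k / d) := by
        simp only [sum_filter_dvd_range two_pos, divisors_gcd_eq_filter_dvd hn.ne']
    _ = ∑ d ∈ n.divisors, φ d *
          ∑ k ∈ ((range (n + 1)).filter (d ∣ ·)).filter (2 ∣ ·),
            (n / d).choose (k / d) := by
        rw [sum_comm' (t' := n.divisors)
          (s' := fun d => ((range (n + 1)).filter (d ∣ ·)).filter (2 ∣ ·))]
        · simp only [mul_sum]
        · intro k d
          simp only [mem_filter]; tauto
    _ = ∑ d ∈ n.divisors, φ d * if 2 ∣ d then 2 ^ (n / d) else 2 ^ (n / d - 1) := by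
        refine sum_congr rfl fun d hd => ?_
        have hd0 : 0 < d := pos_of_mem_divisors hd
        have hnd : n / d ≠ 0 :=
          (div_ne_zero_iff_of_dvd (dvd_of_mem_divisors hd)).2 ⟨hn.ne', hd0.ne'⟩
        rw [sum_filter, sum_filter_dvd_range hd0, ← sum_filter_two_dvd_mul_choose d hnd,
          sum_filter]
        simp only [mul_div_cancel_left₀ _ hd0.ne']
    _ = _ := by simp only [mul_ite, sum_ite]

theorem even_ones_sum_identity (n : ℕ) (hn : 0 < n) (he : Even n) :
    ∑ l ∈ Finset.range (n / 2 + 1),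
        ∑ d ∈ (Nat.gcd (2 * l) n).divisors, d.totient * Nat.choose (n / d) (2 * l / d) =
      (∑ d ∈ n.divisors.filter (fun d => 2 ∣ d), d.totient * 2 ^ (n / d)) +
      (∑ d ∈ n.divisors.filter (fun d => ¬ 2 ∣ d), d.totient * 2 ^ (n / d - 1)) :=
  even_ones_sum_identity_general n hn
end
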